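/- arXiv:1601.02601 — 3 statements merged into one kernel-verified Lean document; each statement's English description precedes it below -/
import Mathlib

section
/- Let T be a tree with at least three vertices such that n_2(T) ≤ n_1(T) and with diameter D(T) = 3. Then χ'_s(T) = n_1(T) + 1. -/
/-!
A tree of diameter 3 is a double star: a central edge `uv`, every other vertex a leaf hanging
from `u` or from `v`, and at least one leaf at each end. Take a diametral path `x u v y`. A vertex
`w` at distance at least 2 from both centres, say closer to `u`, would make both `u` and `y`
predecessors of `v` on geodesics from `w`, as no vertex is farther than 3 from `w`; in a tree
this predecessor is unique. So every vertex is a centre or adjacent to one, and an edge between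
two non-centres would close a triangle or a 4-cycle through the centres.

In a vdec the colour set of a leaf is the single colour of its edge, so leaf edges get pairwise
distinct colours, and none of them can repeat the colour of `uv`, which meets every leaf edge:
at least `n₁ + 1` colours. Conversely, colouring the leaf edges `1, …, n₁` and `uv` with `0` is
a vdec, the two centres being told apart by the colour of a leaf at `u`.
-/

open SimpleGraph

variable {V : Type*}

/-- A vertex distinguishing proper edge `k`-coloring (vdec): a proper edge coloring
(edges sharing an endpoint get different colors) such that distinct vertices have
distinct sets of colors on their incident edges. -/
def IsVDEC (G : SimpleGraph V) (k : ℕ) (c : Sym2 V → Fin k) : Prop :=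
  (∀ ⦃u v w : V⦄, G.Adj u v → G.Adj u w → v ≠ w → c s(u, v) ≠ c s(u, w)) ∧
  (∀ u v : V, u ≠ v →
    {i : Fin k | ∃ w, G.Adj u w ∧ c s(u, w) = i} ≠
    {i : Fin k | ∃ w, G.Adj v w ∧ c s(v, w) = i})

/-- `χ'ₛ(G)`: the minimum number of colors in a vdec of `G`. -/
noncomputable def vdecNum (G : SimpleGraph V) : ℕ :=
  sInf {k : ℕ | ∃ c : Sym2 V → Fin k, IsVDEC G k c}

/-- `n_d(G)`: the number of vertices of degree `d` in `G`. -/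
noncomputable def numDeg (G : SimpleGraph V) (d : ℕ) : ℕ :=
  Nat.card {v : V // Nat.card (G.neighborSet v) = d}

namespace SimpleGraph

variable {G : SimpleGraph V}

theorem IsTree.not_adj_of_adj_of_adj (hT : G.IsTree) {a b c : V} (hab : G.Adj a b)
    (hac : G.Adj a c) : ¬G.Adj b c := fun hbc =>
  hT.dist_ne_of_adj a hbc <| by rw [dist_eq_one_iff_adj.mpr hab, dist_eq_one_iff_adj.mpr hac]

theorem IsTree.eq_of_adj_of_dist_add_one_eq (hT : G.IsTree) {w a b v : V} (ha : G.Adj a v)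
    (hb : G.Adj b v) (hda : G.dist w a + 1 = G.dist w v) (hdb : G.dist w b + 1 = G.dist w v) :
    a = b := by
  obtain ⟨p, hp⟩ := hT.connected.exists_walk_length_eq_dist w a
  obtain ⟨q, hq⟩ := hT.connected.exists_walk_length_eq_dist w b
  have hpv : (p.concat ha).IsPath := (p.concat ha).isPath_of_length_eq_dist (by simp [hp, hda])
  have hqv : (q.concat hb).IsPath := (q.concat hb).isPath_of_length_eq_dist (by simp [hq, hdb])
  exact (Walk.concat_inj <| Subtype.mk.inj <|
    (hT.isAcyclic.subsingleton_path w v).elim ⟨_, hpv⟩ ⟨_, hqv⟩).1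

theorem IsTree.eq_of_adj_of_adj_of_adj_of_adj (hT : G.IsTree) {a b c d : V} (hab : G.Adj a b)
    (hbc : G.Adj b c) (hcd : G.Adj c d) (hda : G.Adj d a) (hac : a ≠ c) : b = d := by
  have hdist : G.dist a c = 2 := by
    have := hT.connected.pos_dist_of_ne hac
    have := hT.dist_eq_dist_add_one_of_adj a hbc
    rw [dist_eq_one_iff_adj.mpr hab] at this
    omega
  refine hT.eq_of_adj_of_dist_add_one_eq (w := a) hbc hcd.symm ?_ ?_ <;>
    simp [hdist, dist_eq_one_iff_adj.mpr hab, dist_eq_one_iff_adj.mpr hda.symm]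

theorem IsTree.dist_le_one_of_dist_add_one_eq (hT : G.IsTree) (hdiam : ∀ a b, G.dist a b ≤ 3)
    {u v y : V} (huv : G.Adj u v) (hvy : G.Adj v y) (hyu : y ≠ u) {w : V}
    (hw : G.dist w u + 1 = G.dist w v) : G.dist w u ≤ 1 := by
  have := hdiam w y
  rcases hT.dist_eq_dist_add_one_of_adj w hvy with hy | hy
  · exact absurd (hT.eq_of_adj_of_dist_add_one_eq hvy.symm huv hy.symm hw) hyu
  · omega

theorem IsTree.adj_or_adj_of_ne (hT : G.IsTree) (hdiam : ∀ a b, G.dist a b ≤ 3) {x u v y : V}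
    (hxu : G.Adj x u) (huv : G.Adj u v) (hvy : G.Adj v y) (hxv : x ≠ v) (hyu : y ≠ u)
    {w : V} (hwu : w ≠ u) (hwv : w ≠ v) : G.Adj w u ∨ G.Adj w v := by
  have := hT.connected.pos_dist_of_ne hwu
  have := hT.connected.pos_dist_of_ne hwv
  simp only [← dist_eq_one_iff_adj]
  rcases hT.dist_eq_dist_add_one_of_adj w huv with h | h
  · have := hT.dist_le_one_of_dist_add_one_eq hdiam huv.symm hxu.symm hxv h.symm
    omega
  · have := hT.dist_le_one_of_dist_add_one_eq hdiam huv hvy hyu h.symm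
    omega

structure IsDoubleStar (G : SimpleGraph V) (u v : V) : Prop where
  adj : G.Adj u v
  exists_adj_left : ∃ x, x ≠ v ∧ G.Adj u x
  exists_adj_right : ∃ y, y ≠ u ∧ G.Adj v y
  neighborSet_eq : ∀ w, w ≠ u → w ≠ v → G.neighborSet w = {u} ∨ G.neighborSet w = {v}

theorem IsTree.isDoubleStar (hT : G.IsTree) (hdiam : ∀ a b, G.dist a b ≤ 3) {x u v y : V}
    (hxu : G.Adj x u) (huv : G.Adj u v) (hvy : G.Adj v y) (hxv : x ≠ v) (hyu : y ≠ u) :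
    IsDoubleStar G u v := by
  have hcentre {w} := hT.adj_or_adj_of_ne hdiam hxu huv hvy hxv hyu (w := w)
  have hnbr : ∀ w z, w ≠ u → w ≠ v → G.Adj w z → z = u ∨ z = v := by
    intro w z hwu hwv hwz
    by_contra! hz
    rcases hcentre hwu hwv with hw | hw <;> rcases hcentre hz.1 hz.2 with hz' | hz'
    · exact hT.not_adj_of_adj_of_adj hw.symm hz'.symm hwz
    · exact hz.1 (hT.eq_of_adj_of_adj_of_adj_of_adj hwz hz' huv.symm hw.symm hwv)
    · exact hz.2 (hT.eq_of_adj_of_adj_of_adj_of_adj hwz hz' huv hw.symm hwu)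
    · exact hT.not_adj_of_adj_of_adj hw.symm hz'.symm hwz
  refine ⟨huv, ⟨x, hxv, hxu.symm⟩, ⟨y, hyu, hvy⟩, fun w hwu hwv => ?_⟩
  rcases hcentre hwu hwv with hw | hw
  · refine .inl (Set.eq_singleton_iff_unique_mem.mpr ⟨hw, fun z hz => ?_⟩)
    refine (hnbr w z hwu hwv hz).resolve_right ?_
    rintro rfl
    exact hT.not_adj_of_adj_of_adj hw hz huv
  · refine .inr (Set.eq_singleton_iff_unique_mem.mpr ⟨hw, fun z hz => ?_⟩)
    refine (hnbr w z hwu hwv hz).resolve_left ?_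
    rintro rfl
    exact hT.not_adj_of_adj_of_adj hw hz huv.symm

theorem IsTree.exists_isDoubleStar_of_diam_eq_three (hT : G.IsTree) (hdiam : G.diam = 3) :
    ∃ u v, IsDoubleStar G u v := by
  have hle a b : G.dist a b ≤ 3 := hdiam ▸ dist_le_diam (ediam_ne_top_of_diam_ne_zero (by omega))
  have := hT.connected.nonempty
  obtain ⟨x, y, hxy⟩ := G.exists_dist_eq_diam
  obtain ⟨p, hp⟩ := hT.connected.exists_walk_length_eq_dist x y
  rcases p with _ | ⟨hxu, _ | ⟨huv, _ | ⟨hvy, _ | ⟨_, _⟩⟩⟩⟩ <;>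
    simp only [Walk.length_cons, Walk.length_nil] at hp <;> try omega
  refine ⟨_, _, hT.isDoubleStar hle hxu huv hvy ?_ ?_⟩
  · rintro rfl
    rw [dist_eq_one_iff_adj.mpr hvy] at hxy
    omega
  · rintro rfl
    rw [dist_eq_one_iff_adj.mpr hxu] at hxy
    omega

def incidentColors (G : SimpleGraph V) {k : ℕ} (c : Sym2 V → Fin k) (w : V) : Set (Fin k) :=
  {i | ∃ x, G.Adj w x ∧ c s(w, x) = i}

theorem adj_iff_of_neighborSet_eq_singleton {w z : V} (hw : G.neighborSet w = {z}) {x : V} :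
    G.Adj w x ↔ x = z := by
  rw [← mem_neighborSet, hw, Set.mem_singleton_iff]

theorem incidentColors_eq_singleton {k : ℕ} (c : Sym2 V → Fin k) {w z : V}
    (hw : G.neighborSet w = {z}) : incidentColors G c w = {c s(w, z)} := by
  ext i
  simp [incidentColors, adj_iff_of_neighborSet_eq_singleton hw, eq_comm]

namespace IsDoubleStar

variable {u v : V}

theorem symm (h : IsDoubleStar G u v) : IsDoubleStar G v u :=
  ⟨h.adj.symm, h.exists_adj_right, h.exists_adj_left,
    fun w hwv hwu => (h.neighborSet_eq w hwu hwv).symm⟩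

theorem card_neighborSet_left_ne_one (h : IsDoubleStar G u v) :
    Nat.card (G.neighborSet u) ≠ 1 := by
  obtain ⟨x, hxv, hux⟩ := h.exists_adj_left
  rw [Ne, Nat.card_coe_set_eq, Set.ncard_eq_one]
  rintro ⟨z, hz⟩
  exact hxv ((adj_iff_of_neighborSet_eq_singleton hz).1 hux |>.trans
    ((adj_iff_of_neighborSet_eq_singleton hz).1 h.adj).symm)

theorem card_neighborSet_eq_one_iff (h : IsDoubleStar G u v) {w : V} :
    Nat.card (G.neighborSet w) = 1 ↔ w ≠ u ∧ w ≠ v := by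
  refine ⟨fun hw => ⟨?_, ?_⟩, fun hw => ?_⟩
  · rintro rfl; exact h.card_neighborSet_left_ne_one hw
  · rintro rfl; exact h.symm.card_neighborSet_left_ne_one hw
  · rcases h.neighborSet_eq w hw.1 hw.2 with hw | hw <;> simp [hw]

theorem numDeg_one_eq (h : IsDoubleStar G u v) :
    numDeg G 1 = Nat.card {w // w ≠ u ∧ w ≠ v} :=
  Nat.card_congr (Equiv.subtypeEquivRight fun _ => h.card_neighborSet_eq_one_iff)

theorem exists_neighborSet_eq (h : IsDoubleStar G u v) {w : V} (hwu : w ≠ u) (hwv : w ≠ v) :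
    ∃ z, (z = u ∨ z = v) ∧ G.neighborSet w = {z} :=
  (h.neighborSet_eq w hwu hwv).elim (⟨u, .inl rfl, ·⟩) (⟨v, .inr rfl, ·⟩)

theorem card_lt_of_isVDEC (h : IsDoubleStar G u v) {k : ℕ} {c : Sym2 V → Fin k}
    (hc : IsVDEC G k c) : Nat.card {w // w ≠ u ∧ w ≠ v} < k := by
  choose z hzuv hz using fun w : {w // w ≠ u ∧ w ≠ v} => h.exists_neighborSet_eq w.2.1 w.2.2
  have hadj (w : {w // w ≠ u ∧ w ≠ v}) : G.Adj (z w) w :=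
    ((adj_iff_of_neighborSet_eq_singleton (hz w)).2 rfl).symm
  have hne_centre (w : {w // w ≠ u ∧ w ≠ v}) : c s(w, z w) ≠ c s(u, v) := by
    have hzw := hadj w
    rw [Sym2.eq_swap]
    rcases hzuv w with hz | hz <;> rw [hz] at hzw ⊢
    · exact hc.1 hzw h.adj w.2.2
    · rw [Sym2.eq_swap (a := u)]; exact hc.1 hzw h.adj.symm w.2.1
  let f : Option {w // w ≠ u ∧ w ≠ v} → Fin k :=
    fun o => o.elim (c s(u, v)) fun w => c s(w, z w)
  have hf : Function.Injective f := by
    rintro (_ | w) (_ | w') hww'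
    · rfl
    · exact absurd hww'.symm (hne_centre w')
    · exact absurd hww' (hne_centre w)
    · by_contra hne
      refine hc.2 w w' (fun hw => hne (congrArg some (Subtype.ext hw))) ?_
      change incidentColors G c w = incidentColors G c w'
      rw [incidentColors_eq_singleton c (hz w), incidentColors_eq_singleton c (hz w')]
      exact congrArg _ hww'
  have : Finite {w // w ≠ u ∧ w ≠ v} := .of_injective _ (hf.comp (Option.some_injective _))
  simpa using Nat.card_le_card_of_injective f hf

end IsDoubleStar

section PendantColoring

variable {u v : V} {n : ℕ} (e : {w // w ≠ u ∧ w ≠ v} ↪ Fin n)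

open Classical in
noncomputable def pendantLabel (x : V) : Fin (n + 1) :=
  if hx : x ≠ u ∧ x ≠ v then (e ⟨x, hx⟩).succ else 0

/-- Every edge of a double star has a centre as an endpoint, whose label is `0`, so a pendant
edge gets the label of its pendant vertex and the central edge `s(u, v)` gets `0`. -/
noncomputable def pendantColoring : Sym2 V → Fin (n + 1) :=
  Sym2.lift ⟨fun x y => pendantLabel e x + pendantLabel e y, fun _ _ => add_comm _ _⟩

theorem pendantColoring_mk (x y : V) :
    pendantColoring e s(x, y) = pendantLabel e x + pendantLabel e y := rfl

theorem pendantLabel_eq_zero_iff {x : V} : pendantLabel e x = 0 ↔ x = u ∨ x = v := by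
  unfold pendantLabel
  split_ifs with hx
  · simp only [Fin.succ_ne_zero, false_iff]; tauto
  · simp only [true_iff]; tauto

theorem pendantColoring_mk_of_centre {a : V} (ha : a = u ∨ a = v) (y : V) :
    pendantColoring e s(a, y) = pendantLabel e y := by
  rw [pendantColoring_mk, (pendantLabel_eq_zero_iff e).2 ha, zero_add]

theorem eq_of_pendantLabel_eq {x y : V} (hxy : pendantLabel e x = pendantLabel e y)
    (hx : x ≠ u ∧ x ≠ v) : x = y := by
  have hy : y ≠ u ∧ y ≠ v := by
    rw [← not_or, ← pendantLabel_eq_zero_iff e, ← hxy, pendantLabel_eq_zero_iff e, not_or]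
    exact hx
  unfold pendantLabel at hxy
  rw [dif_pos hx, dif_pos hy, Fin.succ_inj, e.apply_eq_iff_eq] at hxy
  exact congrArg Subtype.val hxy

namespace IsDoubleStar

theorem pendantColoring_ne (h : IsDoubleStar G u v) {a b b' : V} (hab : G.Adj a b)
    (hab' : G.Adj a b') (hbb' : b ≠ b') :
    pendantColoring e s(a, b) ≠ pendantColoring e s(a, b') := by
  by_cases ha : a ≠ u ∧ a ≠ v
  · obtain ⟨z, -, hz⟩ := h.exists_neighborSet_eq ha.1 ha.2
    rw [adj_iff_of_neighborSet_eq_singleton hz] at hab hab'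
    exact absurd (hab.trans hab'.symm) hbb'
  have ha : a = u ∨ a = v := by tauto
  rw [pendantColoring_mk_of_centre e ha, pendantColoring_mk_of_centre e ha]
  intro hlab
  by_cases hb : b ≠ u ∧ b ≠ v
  · exact hbb' (eq_of_pendantLabel_eq e hlab hb)
  · have hb' := (pendantLabel_eq_zero_iff e).1 (hlab ▸ (pendantLabel_eq_zero_iff e).2 (by tauto))
    have := hab.ne
    have := hab'.ne
    grind

theorem incidentColors_pendantColoring_of_ne (h : IsDoubleStar G u v) {w : V} (hwu : w ≠ u)
    (hwv : w ≠ v) : incidentColors G (pendantColoring e) w = {pendantLabel e w} := by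
  obtain ⟨z, hzuv, hz⟩ := h.exists_neighborSet_eq hwu hwv
  rw [incidentColors_eq_singleton _ hz, Sym2.eq_swap, pendantColoring_mk_of_centre e hzuv]

theorem incidentColors_pendantColoring_ne_of_centre (h : IsDoubleStar G u v) {a b : V}
    (ha : a ≠ u ∧ a ≠ v) (hb : b = u ∨ b = v) :
    incidentColors G (pendantColoring e) a ≠ incidentColors G (pendantColoring e) b := by
  have h0 : 0 ∈ incidentColors G (pendantColoring e) b := by
    rcases hb with rfl | rfl
    · refine ⟨v, h.adj, ?_⟩
      rw [pendantColoring_mk_of_centre e (.inl rfl), pendantLabel_eq_zero_iff]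
      exact .inr rfl
    · refine ⟨u, h.adj.symm, ?_⟩
      rw [pendantColoring_mk_of_centre e (.inr rfl), pendantLabel_eq_zero_iff]
      exact .inl rfl
  rw [h.incidentColors_pendantColoring_of_ne e ha.1 ha.2]
  intro heq
  rw [← heq, Set.mem_singleton_iff, eq_comm, pendantLabel_eq_zero_iff] at h0
  exact not_or.2 ha h0

theorem incidentColors_pendantColoring_left_ne_right (h : IsDoubleStar G u v) :
    incidentColors G (pendantColoring e) u ≠ incidentColors G (pendantColoring e) v := by
  obtain ⟨x, hxv, hux⟩ := h.exists_adj_left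
  have hx : x ≠ u ∧ x ≠ v := ⟨hux.ne.symm, hxv⟩
  intro heq
  obtain ⟨y, hvy, hy⟩ : pendantLabel e x ∈ incidentColors G (pendantColoring e) v :=
    heq ▸ ⟨x, hux, pendantColoring_mk_of_centre e (.inl rfl) x⟩
  rw [pendantColoring_mk_of_centre e (.inr rfl), eq_comm] at hy
  obtain rfl := eq_of_pendantLabel_eq e hy hx
  obtain ⟨z, -, hz⟩ := h.exists_neighborSet_eq hx.1 hx.2
  exact h.adj.ne <| ((adj_iff_of_neighborSet_eq_singleton hz).1 hux.symm).trans
    ((adj_iff_of_neighborSet_eq_singleton hz).1 hvy.symm).symm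

theorem isVDEC_pendantColoring (h : IsDoubleStar G u v) :
    IsVDEC G (n + 1) (pendantColoring e) := by
  refine ⟨fun a b b' => h.pendantColoring_ne e, fun a b hab => ?_⟩
  change incidentColors G _ a ≠ incidentColors G _ b
  by_cases ha : a ≠ u ∧ a ≠ v <;> by_cases hb : b ≠ u ∧ b ≠ v
  · rw [h.incidentColors_pendantColoring_of_ne e ha.1 ha.2,
      h.incidentColors_pendantColoring_of_ne e hb.1 hb.2, Ne, Set.singleton_eq_singleton_iff]
    exact fun hlab => hab (eq_of_pendantLabel_eq e hlab ha)
  · exact h.incidentColors_pendantColoring_ne_of_centre e ha (by tauto)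
  · exact (h.incidentColors_pendantColoring_ne_of_centre e hb (by tauto)).symm
  · have hu : a = u ∨ a = v := by tauto
    have hv : b = u ∨ b = v := by tauto
    rcases hu with rfl | rfl <;> rcases hv with rfl | rfl
    · exact absurd rfl hab
    · exact h.incidentColors_pendantColoring_left_ne_right e
    · exact (h.incidentColors_pendantColoring_left_ne_right e).symm
    · exact absurd rfl hab

theorem vdecNum_eq [Finite V] (h : IsDoubleStar G u v) : vdecNum G = numDeg G 1 + 1 := by
  have hc := h.isVDEC_pendantColoring (Finite.equivFin {w // w ≠ u ∧ w ≠ v}).toEmbedding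
  rw [h.numDeg_one_eq]
  refine le_antisymm (Nat.sInf_le ⟨_, hc⟩) (le_csInf ⟨_, _, hc⟩ ?_)
  rintro k ⟨c, hc⟩
  exact h.card_lt_of_isVDEC hc

end IsDoubleStar

end PendantColoring

end SimpleGraph

theorem vdecNum_of_tree_diam_three_general {V : Type*} [Fintype V] (G : SimpleGraph V)
    (hT : G.IsTree) (hdiam : G.diam = 3) :
    vdecNum G = numDeg G 1 + 1 := by
  obtain ⟨u, v, h⟩ := hT.exists_isDoubleStar_of_diam_eq_three hdiam
  exact h.vdecNum_eq

/-- A tree `T` with at least three vertices, `n₂(T) ≤ n₁(T)` and diameter 3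
satisfies `χ'ₛ(T) = n₁(T) + 1`. -/
theorem vdecNum_of_tree_diam_three {V : Type*} [Fintype V] (G : SimpleGraph V)
    (hT : G.IsTree) (hcard : 3 ≤ Fintype.card V)
    (hn : numDeg G 2 ≤ numDeg G 1) (hdiam : G.diam = 3) :
    vdecNum G = numDeg G 1 + 1 :=
  vdecNum_of_tree_diam_three_general G hT hdiam
end

section
/- Let T be a tree isomorphic to Q(r,2,0) with r ≥ 1 or to Q(0,1,1). Then χ'_s(T) = n_1(T) + 1. -/
open SimpleGraph

variable {V : Type*}

/-- Vertex type of the tree `Q(r,m,n)`: the center `w₀`, the leaves `w₁,…,w_r`,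
the pairs `sᵢ, s'ᵢ` (encoded as `(i,0)` and `(i,1)`), the vertices `t₁,…,tₙ`,
and the leaves `t'_{i,j}` for `j < rv i`. -/
abbrev QVert (r m n : ℕ) (rv : Fin n → ℕ) : Type :=
  Unit ⊕ Fin r ⊕ (Fin m × Fin 2) ⊕ (Fin n ⊕ Σ i : Fin n, Fin (rv i))

/-- The tree `Q(r,m,n)` of diameter four: the center `w₀` is adjacent to the `r` leaves
`wᵢ`, to the `m` vertices `sᵢ` (each `sᵢ` having one further leaf neighbor `s'ᵢ`),
and to the `n` vertices `tᵢ`, where `tᵢ` has `rv i` further neighbors, all leaves. -/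
def QGraph (r m n : ℕ) (rv : Fin n → ℕ) : SimpleGraph (QVert r m n rv) :=
  SimpleGraph.fromRel (fun a b =>
    (a = Sum.inl () ∧
      ((∃ i, b = Sum.inr (Sum.inl i)) ∨
       (∃ i, b = Sum.inr (Sum.inr (Sum.inl (i, (0 : Fin 2))))) ∨
       (∃ i, b = Sum.inr (Sum.inr (Sum.inr (Sum.inl i)))))) ∨
    (∃ i : Fin m, a = Sum.inr (Sum.inr (Sum.inl (i, (0 : Fin 2)))) ∧
       b = Sum.inr (Sum.inr (Sum.inl (i, (1 : Fin 2))))) ∨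
    (∃ (i : Fin n) (j : Fin (rv i)), a = Sum.inr (Sum.inr (Sum.inr (Sum.inl i))) ∧
       b = Sum.inr (Sum.inr (Sum.inr (Sum.inr ⟨i, j⟩)))))

/-!
The pendant edges of a vdec carry pairwise distinct colors, since a leaf's color set is a
singleton; so at least `n₁` colors are needed. With exactly `n₁` colors every color is a pendant
color, and by properness a non-pendant edge `uv` shares its color with a pendant edge away from
`u` and `v`. In `Q(r,2,0)` this forces `c(w₀sᵢ) = c(sⱼs'ⱼ)` for `i ≠ j`, so `s₁` and `s₂` see the
same two colors; in `Q(0,1,1)` it forces `c(w₀t₁) = c(s₁s'₁)`, so `w₀` and `s₁` do.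

For the matching colorings, each edge is colored by a label of its endpoint farther from `w₀`.
A proper coloring gives every vertex as many colors as its degree, so only the leaves and the
vertices of equal degree have to be told apart.
-/

section General
variable {W ι : Type*} {G : SimpleGraph V} {H : SimpleGraph W} {k : ℕ} {c : Sym2 V → Fin k}

def colorSet (G : SimpleGraph V) (c : Sym2 V → Fin k) (v : V) : Set (Fin k) :=
  (fun w => c s(v, w)) '' G.neighborSet v

lemma isVDEC_iff : IsVDEC G k c ↔
    (∀ v, Set.InjOn (fun w => c s(v, w)) (G.neighborSet v)) ∧
      Function.Injective (colorSet G c) := by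
  refine and_congr ⟨fun h v x hx y hy hxy => ?_, fun h u x y hx hy hxy => ?_⟩
    ⟨fun h u v huv => ?_, fun h u v huv => ?_⟩
  · by_contra hne
    exact h hx hy hne hxy
  · exact fun hc => hxy (h u hx hy hc)
  · by_contra hne
    exact h u v hne huv
  · exact fun hc => huv (h hc)

lemma ncard_colorSet {v : V} (hv : Set.InjOn (fun w => c s(v, w)) (G.neighborSet v)) :
    (colorSet G c v).ncard = (G.neighborSet v).ncard :=
  hv.ncard_image

lemma colorSet_of_neighborSet_eq_singleton {v w : V} (h : G.neighborSet v = {w}) :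
    colorSet G c v = {c s(v, w)} := by
  rw [colorSet, h, Set.image_singleton]

lemma colorSet_comp_map (e : G ≃g H) (c : Sym2 W → Fin k) (v : V) :
    colorSet G (c ∘ Sym2.map e) v = colorSet H c (e v) := by
  ext i
  simp only [colorSet, Set.mem_image, mem_neighborSet, Function.comp_apply, Sym2.map_mk]
  exact ⟨fun ⟨w, hw, hi⟩ => ⟨e w, e.map_adj_iff.2 hw, hi⟩,
    fun ⟨w, hw, hi⟩ => ⟨e.symm w, by simpa using e.symm.map_adj_iff.2 hw, by simpa using hi⟩⟩

lemma IsVDEC.comp_map (e : G ≃g H) {c : Sym2 W → Fin k} (hc : IsVDEC H k c) :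
    IsVDEC G k (c ∘ Sym2.map e) := by
  rw [isVDEC_iff] at hc ⊢
  refine ⟨fun v x hx y hy hxy => e.injective <|
    hc.1 (e v) (e.map_adj_iff.2 hx) (e.map_adj_iff.2 hy) (by simpa using hxy), fun u v huv => ?_⟩
  simp only [colorSet_comp_map] at huv
  exact e.injective (hc.2 huv)

lemma vdecNum_congr (e : G ≃g H) : vdecNum G = vdecNum H := by
  unfold vdecNum
  congr 1
  ext k
  exact ⟨fun ⟨_, hc⟩ => ⟨_, hc.comp_map e.symm⟩, fun ⟨_, hc⟩ => ⟨_, hc.comp_map e⟩⟩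

lemma numDeg_congr (e : G ≃g H) (d : ℕ) : numDeg G d = numDeg H d :=
  Nat.card_congr <| e.toEquiv.subtypeEquiv fun v => by
    rw [Nat.card_congr (e.mapNeighborSet v)]
    rfl

lemma vdecNum_eq_of_isVDEC (hc : IsVDEC G k c)
    (hmin : ∀ k' (c' : Sym2 V → Fin k'), IsVDEC G k' c' → k ≤ k') : vdecNum G = k :=
  le_antisymm (Nat.sInf_le ⟨c, hc⟩) (le_csInf ⟨k, c, hc⟩ fun _ ⟨c', hc'⟩ => hmin _ c' hc')

section Pendant
variable {leaf parent : ι → V}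

lemma numDeg_one_eq_card (hleaf : Function.Injective leaf)
    (hnbr : ∀ i, G.neighborSet (leaf i) = {parent i})
    (hrest : ∀ v ∉ Set.range leaf, (G.neighborSet v).ncard ≠ 1) :
    numDeg G 1 = Nat.card ι := by
  refine (Nat.card_congr ((Equiv.ofInjective leaf hleaf).trans
    (Equiv.subtypeEquivRight fun v => ⟨?_, fun hv => ?_⟩))).symm
  · rintro ⟨i, rfl⟩
    rw [hnbr, Nat.card_unique]
  · by_contra hnot
    exact hrest v hnot (by rwa [← Nat.card_coe_set_eq])

lemma IsVDEC.injective_pendantColor (hc : IsVDEC G k c) (hleaf : Function.Injective leaf)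
    (hnbr : ∀ i, G.neighborSet (leaf i) = {parent i}) :
    Function.Injective fun i => c s(leaf i, parent i) := by
  intro i j hij
  refine hleaf ((isVDEC_iff.1 hc).2 ?_)
  rw [colorSet_of_neighborSet_eq_singleton (hnbr i),
    colorSet_of_neighborSet_eq_singleton (hnbr j)]
  exact congrArg _ hij

/-- The pendant colors are distinct, so when `k ≤ #pendant edges` every color is one of them;
properness keeps the pendant edge carrying the color of `uv` away from `u` and `v`. -/
lemma IsVDEC.exists_pendantColor_eq [Finite ι] (hc : IsVDEC G k c)
    (hleaf : Function.Injective leaf) (hnbr : ∀ i, G.neighborSet (leaf i) = {parent i})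
    (hk : k ≤ Nat.card ι)
    {u v : V} (huv : G.Adj u v) (hu : u ∉ Set.range leaf) (hv : v ∉ Set.range leaf) :
    ∃ i, c s(u, v) = c s(leaf i, parent i) ∧ parent i ≠ u ∧ parent i ≠ v := by
  obtain ⟨i, hi⟩ := ((hc.injective_pendantColor hleaf hnbr).bijective_of_nat_card_le
    (by simpa using hk)).2 (c s(u, v))
  have hadj : G.Adj (parent i) (leaf i) := ((G.mem_neighborSet _ _).1 (by simp [hnbr])).symm
  refine ⟨i, hi.symm, ?_, ?_⟩
  · rintro rfl
    exact hc.1 huv hadj (fun h => hv ⟨i, h.symm⟩) (by rw [← hi, Sym2.eq_swap])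
  · rintro rfl
    exact hc.1 huv.symm hadj (fun h => hu ⟨i, h.symm⟩) (by rw [Sym2.eq_swap, ← hi, Sym2.eq_swap])

/-- A proper coloring gives `v` exactly `deg v` colors, so it separates vertices of different
degrees; leaves are separated by their pendant colors. -/
lemma injective_colorSet_of_pendantColor (hnbr : ∀ i, G.neighborSet (leaf i) = {parent i})
    (hproper : ∀ v, Set.InjOn (fun w => c s(v, w)) (G.neighborSet v))
    (hrest : ∀ v ∉ Set.range leaf, (G.neighborSet v).ncard ≠ 1)
    (hpend : Function.Injective fun i => c s(leaf i, parent i))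
    (hcore : ∀ u ∉ Set.range leaf, ∀ v ∉ Set.range leaf,
      (G.neighborSet u).ncard = (G.neighborSet v).ncard → colorSet G c u = colorSet G c v → u = v) :
    Function.Injective (colorSet G c) := by
  intro u v huv
  have hdeg : (G.neighborSet u).ncard = (G.neighborSet v).ncard := by
    rw [← ncard_colorSet (hproper u), huv, ncard_colorSet (hproper v)]
  have hleaf_deg (i : ι) : (G.neighborSet (leaf i)).ncard = 1 := by
    rw [hnbr, Set.ncard_singleton]
  by_cases hu : u ∈ Set.range leaf <;> by_cases hv : v ∈ Set.range leaf
  · obtain ⟨i, rfl⟩ := hu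
    obtain ⟨j, rfl⟩ := hv
    rw [colorSet_of_neighborSet_eq_singleton (hnbr i),
      colorSet_of_neighborSet_eq_singleton (hnbr j), Set.singleton_eq_singleton_iff] at huv
    rw [hpend huv]
  · obtain ⟨i, rfl⟩ := hu
    exact absurd (hdeg ▸ hleaf_deg i) (hrest v hv)
  · obtain ⟨j, rfl⟩ := hv
    exact absurd (hdeg.trans (hleaf_deg j)) (hrest u hu)
  · exact hcore u hu v hv hdeg huv

end Pendant

end General

/-- The value `0` on pairs of equal depth is junk: adjacent vertices below never have equal
depth. -/
def colorByDepth {k : ℕ} [NeZero k] (depth : V → ℕ) (f : V → Fin k) : Sym2 V → Fin k :=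
  Sym2.lift ⟨fun u v => if depth u < depth v then f v else if depth v < depth u then f u else 0,
    fun u v => by dsimp only; split_ifs <;> first | rfl | omega⟩

@[simp] lemma colorByDepth_mk {k : ℕ} [NeZero k] (depth : V → ℕ) (f : V → Fin k) (u v : V) :
    colorByDepth depth f s(u, v) =
      if depth u < depth v then f v else if depth v < depth u then f u else 0 := rfl

@[simp] lemma Fin.castAdd_ne_natAdd {a b : ℕ} (i : Fin a) (j : Fin b) :
    Fin.castAdd b i ≠ Fin.natAdd a j :=
  Fin.ne_of_val_ne (by simp; omega)

@[simp] lemma Fin.natAdd_ne_castAdd {a b : ℕ} (i : Fin a) (j : Fin b) :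
    Fin.natAdd a j ≠ Fin.castAdd b i :=
  (Fin.castAdd_ne_natAdd i j).symm

namespace QVert
variable {r m n : ℕ} {rv : Fin n → ℕ}

abbrev w₀ : QVert r m n rv := Sum.inl ()
abbrev w (i : Fin r) : QVert r m n rv := Sum.inr (Sum.inl i)
abbrev s (i : Fin m) : QVert r m n rv := Sum.inr (Sum.inr (Sum.inl (i, 0)))
abbrev s' (i : Fin m) : QVert r m n rv := Sum.inr (Sum.inr (Sum.inl (i, 1)))
abbrev t (i : Fin n) : QVert r m n rv := Sum.inr (Sum.inr (Sum.inr (Sum.inl i)))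
abbrev t' (i : Fin n) (j : Fin (rv i)) : QVert r m n rv :=
  Sum.inr (Sum.inr (Sum.inr (Sum.inr ⟨i, j⟩)))

abbrev Leaf (r m n : ℕ) (rv : Fin n → ℕ) : Type := Fin r ⊕ Fin m ⊕ Σ i : Fin n, Fin (rv i)

def leaf : Leaf r m n rv → QVert r m n rv := Sum.elim w (Sum.elim s' fun p => t' p.1 p.2)

def parent : Leaf r m n rv → QVert r m n rv := Sum.elim (fun _ => w₀) (Sum.elim s fun p => t p.1)

lemma leaf_injective : Function.Injective (leaf : Leaf r m n rv → QVert r m n rv) := by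
  rintro (i | i | ⟨i, j⟩) (i' | i' | ⟨i', j'⟩) h <;> simp_all [leaf]

@[simp] lemma w₀_notMem_range_leaf : (w₀ : QVert r m n rv) ∉ Set.range leaf := by
  rintro ⟨i | i | i, h⟩ <;> simp [leaf] at h

@[simp] lemma s_notMem_range_leaf (i : Fin m) : (s i : QVert r m n rv) ∉ Set.range leaf := by
  rintro ⟨i | i | i, h⟩ <;> simp [leaf] at h

@[simp] lemma t_notMem_range_leaf (i : Fin n) : (t i : QVert r m n rv) ∉ Set.range leaf := by
  rintro ⟨i | i | i, h⟩ <;> simp [leaf] at h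

lemma eq_w₀_or_s_or_t {v : QVert r m n rv} (hv : v ∉ Set.range leaf) :
    v = w₀ ∨ (∃ i, v = s i) ∨ ∃ i, v = t i := by
  rcases v with _ | i | ⟨i, j⟩ | i | ⟨i, j⟩
  · exact .inl rfl
  · exact absurd ⟨.inl i, rfl⟩ hv
  · obtain rfl | rfl := Fin.exists_fin_two.mp ⟨j, rfl⟩
    · exact .inr (.inl ⟨i, rfl⟩)
    · exact absurd ⟨.inr (.inl i), rfl⟩ hv
  · exact .inr (.inr ⟨i, rfl⟩)
  · exact absurd ⟨.inr (.inr ⟨i, j⟩), rfl⟩ hv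

@[elab_as_elim]
lemma cases_leaf {motive : QVert r m n rv → Prop} (v : QVert r m n rv) (w₀ : motive w₀)
    (s : ∀ i, motive (s i)) (t : ∀ i, motive (t i)) (leaf : ∀ x, motive (leaf x)) : motive v := by
  rcases v with _ | i | ⟨i, j⟩ | i | ⟨i, j⟩
  · exact w₀
  · exact leaf (.inl i)
  · obtain rfl | rfl := Fin.exists_fin_two.mp ⟨j, rfl⟩
    · exact s i
    · exact leaf (.inr (.inl i))
  · exact t i
  · exact leaf (.inr (.inr ⟨i, j⟩))

def depth : QVert r m n rv → ℕ
  | .inl _ => 0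
  | .inr (.inl _) => 1
  | .inr (.inr (.inl (_, j))) => j + 1
  | .inr (.inr (.inr (.inl _))) => 1
  | .inr (.inr (.inr (.inr _))) => 2

@[simp] lemma depth_w₀ : depth (w₀ : QVert r m n rv) = 0 := rfl
@[simp] lemma depth_w (i : Fin r) : depth (w i : QVert r m n rv) = 1 := rfl
@[simp] lemma depth_s (i : Fin m) : depth (s i : QVert r m n rv) = 1 := rfl
@[simp] lemma depth_s' (i : Fin m) : depth (s' i : QVert r m n rv) = 2 := rfl
@[simp] lemma depth_t (i : Fin n) : depth (t i : QVert r m n rv) = 1 := rfl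
@[simp] lemma depth_t' (i : Fin n) (j : Fin (rv i)) : depth (t' i j : QVert r m n rv) = 2 := rfl

lemma depth_parent_lt_depth_leaf (x : Leaf r m n rv) : depth (parent x) < depth (leaf x) := by
  rcases x with i | i | i <;> simp [leaf, parent, depth]

end QVert

namespace QGraph
open QVert

section
variable {r m n : ℕ} {rv : Fin n → ℕ}

lemma adj_w₀_s (i : Fin m) : (QGraph r m n rv).Adj w₀ (s i) := by simp [QGraph]

lemma adj_w₀_t (i : Fin n) : (QGraph r m n rv).Adj w₀ (t i) := by simp [QGraph]

lemma neighborSet_w₀ : (QGraph r m n rv).neighborSet w₀ =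
    Set.range w ∪ Set.range s ∪ Set.range t := by
  ext x
  rcases x with _ | i | ⟨i, j⟩ | i | ⟨i, j⟩ <;> simp [QGraph]
  fin_cases j <;> simp

lemma neighborSet_s (i : Fin m) : (QGraph r m n rv).neighborSet (s i) = {w₀, s' i} := by
  ext x
  rcases x with _ | i | ⟨i, j⟩ | i | ⟨i, j⟩ <;> simp [QGraph]
  fin_cases j <;> simp [eq_comm]

lemma neighborSet_t (i : Fin n) : (QGraph r m n rv).neighborSet (t i) =
    insert w₀ (Set.range (t' i)) := by
  ext x
  rcases x with _ | i | ⟨i, j⟩ | i | ⟨i', j⟩ <;> simp [QGraph]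
  aesop

lemma neighborSet_leaf (x : Leaf r m n rv) :
    (QGraph r m n rv).neighborSet (leaf x) = {parent x} := by
  ext y
  rcases x with i | i | ⟨i, j⟩ <;> rcases y with _ | i' | ⟨i', j'⟩ | i' | ⟨i', j'⟩ <;>
    simp [QGraph, leaf, parent]
  · rintro rfl rfl - h
    exact absurd h (by decide)
  · exact ⟨fun h => h.1.symm, by rintro rfl; exact ⟨rfl, j, HEq.rfl⟩⟩

lemma ncard_neighborSet_w₀ : ((QGraph r m n rv).neighborSet w₀).ncard = r + m + n := by
  have h : Set.range w ∪ Set.range s ∪ Set.range t =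
      Set.range (Sum.elim w (Sum.elim s t) : Fin r ⊕ Fin m ⊕ Fin n → QVert r m n rv) := by
    simp [Set.Sum.elim_range, Set.union_assoc]
  rw [neighborSet_w₀, h, Set.ncard_range_of_injective]
  · simp [add_assoc]
  · rintro (i | i | i) (j | j | j) h <;> simp_all

lemma ncard_neighborSet_s (i : Fin m) : ((QGraph r m n rv).neighborSet (s i)).ncard = 2 := by
  rw [neighborSet_s, Set.ncard_pair (by simp)]

lemma ncard_neighborSet_t (i : Fin n) :
    ((QGraph r m n rv).neighborSet (t i)).ncard = rv i + 1 := by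
  rw [neighborSet_t, Set.ncard_insert_of_notMem (by simp),
    Set.ncard_range_of_injective (fun j j' h => by simpa using h)]
  simp

lemma ncard_neighborSet_ne_one (h₀ : r + m + n ≠ 1) (hrv : ∀ i, rv i ≠ 0) :
    ∀ v ∉ Set.range leaf, ((QGraph r m n rv).neighborSet v).ncard ≠ 1 := by
  intro v hv
  induction v using cases_leaf with
  | w₀ => rwa [ncard_neighborSet_w₀]
  | s i => simp [ncard_neighborSet_s]
  | t i => simpa [ncard_neighborSet_t] using hrv i
  | leaf x => exact absurd ⟨x, rfl⟩ hv

lemma numDeg_one (h₀ : r + m + n ≠ 1) (hrv : ∀ i, rv i ≠ 0) :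
    numDeg (QGraph r m n rv) 1 = r + m + ∑ i, rv i := by
  rw [numDeg_one_eq_card leaf_injective neighborSet_leaf (ncard_neighborSet_ne_one h₀ hrv)]
  simp [add_assoc]

variable {k : ℕ} (c : Sym2 (QVert r m n rv) → Fin k)

lemma colorSet_s (i : Fin m) :
    colorSet (QGraph r m n rv) c (s i) = {c s(s i, w₀), c s(s i, s' i)} := by
  simp only [colorSet, neighborSet_s, Set.image_insert_eq, Set.image_singleton]

lemma colorByDepth_leaf_parent [NeZero k] (f : QVert r m n rv → Fin k) (x : Leaf r m n rv) :
    colorByDepth depth f s(leaf x, parent x) = f (leaf x) := by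
  simp [depth_parent_lt_depth_leaf x, (depth_parent_lt_depth_leaf x).not_gt]

end

section TwoZero
variable {r k : ℕ}

lemma numDeg_one_two_zero : numDeg (QGraph r 2 0 Fin.elim0) 1 = r + 2 := by
  simpa using numDeg_one (r := r) (rv := Fin.elim0) (by omega) fun i => i.elim0

lemma add_three_le_of_isVDEC_two_zero {c : Sym2 (QVert r 2 0 Fin.elim0) → Fin k}
    (hc : IsVDEC (QGraph r 2 0 Fin.elim0) k c) : r + 3 ≤ k := by
  by_contra! hk
  have cross (i j : Fin 2) (hij : i ≠ j) : c s(s i, w₀) = c s(s j, s' j) := by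
    obtain ⟨x, hx, hxi, hx₀⟩ := hc.exists_pendantColor_eq leaf_injective neighborSet_leaf
      (by simp; omega) (adj_w₀_s i).symm (s_notMem_range_leaf i) w₀_notMem_range_leaf
    rcases x with x | x | ⟨x, -⟩
    · exact absurd rfl hx₀
    · obtain rfl : x = j := by simp [parent] at hxi; omega
      rw [hx, Sym2.eq_swap]
      rfl
    · exact x.elim0
  refine absurd ((isVDEC_iff.1 hc).2 ?_) (by simp : (s 0 : QVert r 2 0 Fin.elim0) ≠ s 1)
  rw [colorSet_s, colorSet_s, cross 0 1 (by decide), cross 1 0 (by decide), Set.pair_comm]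

/-- Through `colorByDepth`: `w₀wᵢ ↦ i`, `w₀s₀ ↦ r`, `w₀s₁ ↦ r + 1`, `s₀s'₀ ↦ r + 2`,
`s₁s'₁ ↦ r`. -/
def labelsTwoZero (r : ℕ) : QVert r 2 0 Fin.elim0 → Fin (r + 3)
  | .inr (.inl i) => Fin.castAdd 3 i
  | .inr (.inr (.inl (i, j))) =>
    ![![Fin.natAdd r 0, Fin.natAdd r 2], ![Fin.natAdd r 1, Fin.natAdd r 0]] i j
  | _ => 0

@[simp] lemma labelsTwoZero_w (i : Fin r) : labelsTwoZero r (w i) = Fin.castAdd 3 i := rfl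
@[simp] lemma labelsTwoZero_s_zero : labelsTwoZero r (s 0) = Fin.natAdd r 0 := rfl
@[simp] lemma labelsTwoZero_s_one : labelsTwoZero r (s 1) = Fin.natAdd r 1 := rfl
@[simp] lemma labelsTwoZero_s'_zero : labelsTwoZero r (s' 0) = Fin.natAdd r 2 := rfl
@[simp] lemma labelsTwoZero_s'_one : labelsTwoZero r (s' 1) = Fin.natAdd r 0 := rfl

lemma injOn_colorByDepth_labelsTwoZero (v : QVert r 2 0 Fin.elim0) :
    Set.InjOn (fun x => colorByDepth depth (labelsTwoZero r) s(v, x))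
      ((QGraph r 2 0 Fin.elim0).neighborSet v) := by
  induction v using cases_leaf with
  | w₀ =>
    rw [neighborSet_w₀]
    simp only [Set.InjOn, Set.mem_union, Set.mem_range, forall_exists_index, or_imp, forall_and,
      forall_apply_eq_imp_iff]
    simp [Fin.forall_fin_two]
  | s i => fin_cases i <;> simp [neighborSet_s]
  | t i => exact i.elim0
  | leaf x => rw [neighborSet_leaf]; exact Set.injOn_singleton _ _

lemma injective_labelsTwoZero_leaf : Function.Injective fun x => labelsTwoZero r (leaf x) := by
  rintro (i | i | ⟨i, -⟩) (j | j | ⟨j, -⟩) h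
  all_goals first | exact i.elim0 | exact j.elim0 | skip
  all_goals (try fin_cases i) <;> (try fin_cases j) <;> simp_all [leaf]

lemma isVDEC_labelsTwoZero (hr : 1 ≤ r) :
    IsVDEC (QGraph r 2 0 Fin.elim0) (r + 3) (colorByDepth depth (labelsTwoZero r)) := by
  refine isVDEC_iff.2 ⟨injOn_colorByDepth_labelsTwoZero, injective_colorSet_of_pendantColor
    neighborSet_leaf injOn_colorByDepth_labelsTwoZero
    (ncard_neighborSet_ne_one (by omega) fun i => i.elim0) ?_ ?_⟩
  · simpa only [colorByDepth_leaf_parent] using injective_labelsTwoZero_leaf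
  · intro u hu v hv hdeg huv
    obtain rfl | ⟨i, rfl⟩ | ⟨i, -⟩ := eq_w₀_or_s_or_t hu <;>
      obtain rfl | ⟨j, rfl⟩ | ⟨j, -⟩ := eq_w₀_or_s_or_t hv
    all_goals first
      | rfl
      | exact i.elim0
      | exact j.elim0
      | (simp [ncard_neighborSet_w₀, ncard_neighborSet_s] at hdeg; omega)
      | skip
    fin_cases i <;> fin_cases j <;> simp [colorSet_s, Set.pair_eq_pair_iff] at huv ⊢

lemma vdecNum_two_zero (hr : 1 ≤ r) : vdecNum (QGraph r 2 0 Fin.elim0) = r + 3 :=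
  vdecNum_eq_of_isVDEC (isVDEC_labelsTwoZero hr) fun _ _ hc => add_three_le_of_isVDEC_two_zero hc

end TwoZero

section ZeroOneOne
variable {k : ℕ} {rv : Fin 1 → ℕ}

lemma numDeg_one_zero_one_one (hrv : 2 ≤ rv 0) : numDeg (QGraph 0 1 1 rv) 1 = rv 0 + 1 := by
  simpa [add_comm] using numDeg_one (r := 0) (m := 1) (n := 1) (rv := rv) (by omega)
    fun i => by rw [Fin.eq_zero i]; omega

lemma neighborSet_w₀_zero_one_one : (QGraph 0 1 1 rv).neighborSet w₀ = {s 0, t 0} := by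
  simpa [neighborSet_w₀, Set.range_unique] using Set.pair_comm _ _

lemma colorSet_w₀_zero_one_one (c : Sym2 (QVert 0 1 1 rv) → Fin k) :
    colorSet (QGraph 0 1 1 rv) c w₀ = {c s(w₀, s 0), c s(w₀, t 0)} := by
  rw [colorSet, neighborSet_w₀_zero_one_one, Set.image_pair]

lemma add_two_le_of_isVDEC_zero_one_one {c : Sym2 (QVert 0 1 1 rv) → Fin k}
    (hc : IsVDEC (QGraph 0 1 1 rv) k c) : rv 0 + 2 ≤ k := by
  by_contra! hk
  obtain ⟨x, hx, hx₀, hxt⟩ := hc.exists_pendantColor_eq leaf_injective neighborSet_leaf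
    (by simp; omega) (adj_w₀_t 0) w₀_notMem_range_leaf (t_notMem_range_leaf 0)
  rcases x with x | x | ⟨x, j⟩
  · exact x.elim0
  · obtain rfl := Fin.eq_zero x
    have hx' : c s(w₀, t 0) = c s(s 0, s' 0) := hx.trans (congrArg c Sym2.eq_swap)
    refine absurd ((isVDEC_iff.1 hc).2 ?_) (by simp : (w₀ : QVert 0 1 1 rv) ≠ s 0)
    rw [colorSet_w₀_zero_one_one, colorSet_s, hx', Sym2.eq_swap (a := w₀)]
  · exact hxt (congrArg t (Fin.eq_zero x))

/-- Through `colorByDepth`, with `q = rv 0`: `w₀s₀ ↦ 0`, `s₀s'₀ ↦ q`, `w₀t₀ ↦ q + 1`,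
`t₀t'₀ⱼ ↦ j`. -/
def labelsZeroOneOne (rv : Fin 1 → ℕ) : QVert 0 1 1 rv → Fin (rv 0 + 2)
  | .inr (.inr (.inl (_, j))) => ![0, Fin.natAdd (rv 0) 0] j
  | .inr (.inr (.inr (.inl _))) => Fin.natAdd (rv 0) 1
  | .inr (.inr (.inr (.inr ⟨i, j⟩))) =>
    Fin.castAdd 2 (Fin.cast (congrArg rv (Fin.eq_zero i)) j)
  | _ => 0

@[simp] lemma labelsZeroOneOne_s : labelsZeroOneOne rv (s 0) = 0 := rfl
@[simp] lemma labelsZeroOneOne_s' : labelsZeroOneOne rv (s' 0) = Fin.natAdd (rv 0) 0 := rfl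
@[simp] lemma labelsZeroOneOne_t : labelsZeroOneOne rv (t 0) = Fin.natAdd (rv 0) 1 := rfl
@[simp] lemma labelsZeroOneOne_t' (j : Fin (rv 0)) :
    labelsZeroOneOne rv (t' 0 j) = Fin.castAdd 2 j := rfl

lemma injOn_colorByDepth_labelsZeroOneOne (hrv : 2 ≤ rv 0) (v : QVert 0 1 1 rv) :
    Set.InjOn (fun x => colorByDepth depth (labelsZeroOneOne rv) s(v, x))
      ((QGraph 0 1 1 rv).neighborSet v) := by
  induction v using cases_leaf with
  | w₀ =>
    simp [neighborSet_w₀_zero_one_one, Fin.ext_iff]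
  | s i =>
    obtain rfl := Fin.eq_zero i
    simp [neighborSet_s, Fin.ext_iff]
    omega
  | t i =>
    obtain rfl := Fin.eq_zero i
    rw [neighborSet_t]
    simp only [Set.InjOn, Set.mem_insert_iff, Set.mem_range, forall_eq_or_imp, forall_exists_index,
      forall_apply_eq_imp_iff]
    simp
  | leaf x => rw [neighborSet_leaf]; exact Set.injOn_singleton _ _

lemma injective_labelsZeroOneOne_leaf :
    Function.Injective fun x => labelsZeroOneOne rv (leaf x) := by
  rintro (i | i | ⟨i, j⟩) (i' | i' | ⟨i', j'⟩) h
  all_goals first | exact i.elim0 | exact i'.elim0 | skip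
  all_goals (try obtain rfl := Fin.eq_zero i)
  all_goals (try obtain rfl := Fin.eq_zero i')
  all_goals simp_all [leaf]

lemma isVDEC_labelsZeroOneOne (hrv : 2 ≤ rv 0) :
    IsVDEC (QGraph 0 1 1 rv) (rv 0 + 2) (colorByDepth depth (labelsZeroOneOne rv)) := by
  refine isVDEC_iff.2 ⟨injOn_colorByDepth_labelsZeroOneOne hrv,
    injective_colorSet_of_pendantColor neighborSet_leaf (injOn_colorByDepth_labelsZeroOneOne hrv)
      (ncard_neighborSet_ne_one (by omega) fun i => by rw [Fin.eq_zero i]; omega) ?_ ?_⟩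
  · simpa only [colorByDepth_leaf_parent] using injective_labelsZeroOneOne_leaf
  · intro u hu v hv hdeg huv
    obtain rfl | ⟨i, rfl⟩ | ⟨i, rfl⟩ := eq_w₀_or_s_or_t hu <;>
      obtain rfl | ⟨j, rfl⟩ | ⟨j, rfl⟩ := eq_w₀_or_s_or_t hv <;>
      simp only [Fin.eq_zero] at hdeg huv ⊢
    all_goals first
      | (simp [ncard_neighborSet_w₀, ncard_neighborSet_s, ncard_neighborSet_t] at hdeg; omega)
      | (simp [colorSet_w₀_zero_one_one, colorSet_s, Set.pair_eq_pair_iff, Fin.ext_iff] at huv)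

lemma vdecNum_zero_one_one (hrv : 2 ≤ rv 0) : vdecNum (QGraph 0 1 1 rv) = rv 0 + 2 :=
  vdecNum_eq_of_isVDEC (isVDEC_labelsZeroOneOne hrv) fun _ _ hc =>
    add_two_le_of_isVDEC_zero_one_one hc

end ZeroOneOne

end QGraph

theorem vdecNum_of_exceptional_trees_general {V : Type*} (G : SimpleGraph V)
    (h : (∃ r : ℕ, 1 ≤ r ∧ Nonempty (G ≃g QGraph r 2 0 Fin.elim0)) ∨
         (∃ rv : Fin 1 → ℕ, 2 ≤ rv 0 ∧ Nonempty (G ≃g QGraph 0 1 1 rv))) :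
    vdecNum G = numDeg G 1 + 1 := by
  rcases h with ⟨r, hr, ⟨e⟩⟩ | ⟨rv, hrv, ⟨e⟩⟩
  · rw [vdecNum_congr e, numDeg_congr e, QGraph.vdecNum_two_zero hr, QGraph.numDeg_one_two_zero]
  · rw [vdecNum_congr e, numDeg_congr e, QGraph.vdecNum_zero_one_one hrv,
      QGraph.numDeg_one_zero_one_one hrv]

/-- A tree isomorphic to `Q(r,2,0)` with `r ≥ 1` or to `Q(0,1,1)` satisfies
`χ'ₛ(T) = n₁(T) + 1`. -/
theorem vdecNum_of_exceptional_trees {V : Type*} [Fintype V] (G : SimpleGraph V)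
    (h : (∃ r : ℕ, 1 ≤ r ∧ Nonempty (G ≃g QGraph r 2 0 Fin.elim0)) ∨
         (∃ rv : Fin 1 → ℕ, 2 ≤ rv 0 ∧ Nonempty (G ≃g QGraph 0 1 1 rv))) :
    vdecNum G = numDeg G 1 + 1 :=
  vdecNum_of_exceptional_trees_general G h
end

section
/- Let S_{m+1,n+1} (m, n ≥ 1) be the double star obtained from disjoint stars K_{1,m} with center s and K_{1,n} with center t by adding the edge st. Then χ'_es(S_{m+1,n+1}) = χ'_s(S_{m+1,n+1}) = m + n + 1. -/
open SimpleGraph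

variable {V : Type*}

/-- An edge coloring is equitable if any two color classes differ in size by at most one. -/
def IsEquitable (G : SimpleGraph V) (k : ℕ) (c : Sym2 V → Fin k) : Prop :=
  ∀ i j : Fin k,
    (Nat.card {e : Sym2 V // e ∈ G.edgeSet ∧ c e = i} : ℤ) -
      (Nat.card {e : Sym2 V // e ∈ G.edgeSet ∧ c e = j} : ℤ) ≤ 1

/-- `χ'ₑₛ(G)`: the minimum number of colors in an equitable vdec of `G`. -/
noncomputable def evdecNum (G : SimpleGraph V) : ℕ :=
  sInf {k : ℕ | ∃ c : Sym2 V → Fin k, IsVDEC G k c ∧ IsEquitable G k c}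

/-- Vertex type of the double star `S_{m+1,n+1}`: `Sum.inl (Sum.inl ())` is the center `s`
with leaves `s₁,…,s_m`, and `Sum.inr (Sum.inl ())` is the center `t` with leaves
`t₁,…,t_n`. -/
abbrev DSVert (m n : ℕ) : Type := (Unit ⊕ Fin m) ⊕ (Unit ⊕ Fin n)

/-- The double star `S_{m+1,n+1}`, obtained from disjoint stars `K_{1,m}` (center `s`)
and `K_{1,n}` (center `t`) by adding the edge `st`. -/
def doubleStar (m n : ℕ) : SimpleGraph (DSVert m n) :=
  SimpleGraph.fromRel (fun a b =>
    (∃ i : Fin m, a = Sum.inl (Sum.inl ()) ∧ b = Sum.inl (Sum.inr i)) ∨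
    (∃ j : Fin n, a = Sum.inr (Sum.inl ()) ∧ b = Sum.inr (Sum.inr j)) ∨
    (a = Sum.inl (Sum.inl ()) ∧ b = Sum.inr (Sum.inl ())))

/-!
In any vdec of a double star all edges get distinct colours: two edges either share a centre,
or they are pendant edges `s sᵢ` and `t tⱼ`, whose leaves have the singleton colour sets
`{c(s sᵢ)}` and `{c(t tⱼ)}`. Conversely, a colouring that is injective on edges is a vdec as
soon as distinct vertices have distinct sets of incident edges (which fails only for a `K₂`
component or two isolated vertices), and it is trivially equitable. Hence both invariants equal
the number of edges, `m + n + 1`.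
-/

open Function

section EdgeColoring

variable (G : SimpleGraph V) {k : ℕ}

def edgeColorSet (c : Sym2 V → Fin k) (u : V) : Set (Fin k) :=
  {i | ∃ w, G.Adj u w ∧ c s(u, w) = i}

variable {G}

theorem edgeColorSet_eq_image (c : Sym2 V → Fin k) (u : V) :
    edgeColorSet G c u = c '' G.incidenceSet u := by
  ext i
  constructor
  · rintro ⟨w, hw, rfl⟩
    exact ⟨s(u, w), (G.mem_incidenceSet u w).2 hw, rfl⟩
  · rintro ⟨e, ⟨he, hue⟩, rfl⟩
    obtain ⟨w, rfl⟩ := Sym2.mem_iff_exists.1 hue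
    exact ⟨w, he, rfl⟩

theorem edgeColorSet_eq_singleton (c : Sym2 V → Fin k) {u v : V}
    (h : G.neighborSet u = {v}) : edgeColorSet G c u = {c s(u, v)} := by
  ext i
  simp [edgeColorSet, ← mem_neighborSet, h, eq_comm]

theorem IsVDEC.apply_ne_of_neighborSet_eq_singleton {c : Sym2 V → Fin k} (hc : IsVDEC G k c)
    {u u' v v' : V} (hu : u ≠ u') (hN : G.neighborSet u = {v})
    (hN' : G.neighborSet u' = {v'}) : c s(v, u) ≠ c s(v', u') := by
  intro h
  apply hc.2 u u' hu
  change edgeColorSet G c u = edgeColorSet G c u'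
  rw [edgeColorSet_eq_singleton c hN, edgeColorSet_eq_singleton c hN', Sym2.eq_swap, h,
    Sym2.eq_swap]

theorem neighborSet_subset_of_incidenceSet_eq {u v : V} (huv : u ≠ v)
    (h : G.incidenceSet u = G.incidenceSet v) : G.neighborSet u ⊆ {v} := by
  intro w hw
  have hv : v ∈ s(u, w) := (h ▸ (G.mem_incidenceSet u w).2 hw).2
  rcases Sym2.mem_iff.1 hv with rfl | rfl
  · exact absurd rfl huv
  · rfl

theorem isVDEC_of_injOn {c : Sym2 V → Fin k} (hc : Set.InjOn c G.edgeSet)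
    (hG : Injective G.incidenceSet) : IsVDEC G k c := by
  refine ⟨fun u v w huv huw hvw h => hvw (Sym2.congr_right.1 (hc huv huw h)),
    fun u v huv h => huv (hG ?_)⟩
  change edgeColorSet G c u = edgeColorSet G c v at h
  rwa [edgeColorSet_eq_image, edgeColorSet_eq_image,
    hc.image_eq_image_iff (G.incidenceSet_subset u) (G.incidenceSet_subset v)] at h

theorem isEquitable_of_injOn {c : Sym2 V → Fin k} (hc : Set.InjOn c G.edgeSet) :
    IsEquitable G k c := by
  have hle (i : Fin k) : Nat.card {e // e ∈ G.edgeSet ∧ c e = i} ≤ 1 := by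
    have : Subsingleton {e // e ∈ G.edgeSet ∧ c e = i} :=
      ⟨fun ⟨_, he, hi⟩ ⟨_, he', hi'⟩ => Subtype.ext (hc he he' (hi.trans hi'.symm))⟩
    exact Finite.card_le_one_iff_subsingleton.2 this
  intro i j
  have := hle i
  omega

theorem ncard_edgeSet_le_of_injOn {c : Sym2 V → Fin k} (hc : Set.InjOn c G.edgeSet) :
    G.edgeSet.ncard ≤ k := by
  simpa using Set.ncard_le_ncard_of_injOn c (fun _ _ => Set.mem_univ _) hc

theorem exists_injOn_edgeSet (hfin : G.edgeSet.Finite) (hne : G.edgeSet.Nonempty) :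
    ∃ c : Sym2 V → Fin G.edgeSet.ncard, Set.InjOn c G.edgeSet := by
  have := hfin.to_subtype
  let e : G.edgeSet ≃ Fin G.edgeSet.ncard :=
    (Finite.equivFin _).trans (finCongr (Nat.card_coe_set_eq _))
  refine ⟨extend Subtype.val e fun _ => e ⟨_, hne.some_mem⟩, fun a ha b hb hab => ?_⟩
  rw [Subtype.val_injective.extend_apply e _ ⟨a, ha⟩,
    Subtype.val_injective.extend_apply e _ ⟨b, hb⟩] at hab
  exact congrArg Subtype.val (e.injective hab)

theorem vdecNum_eq_ncard_edgeSet (hfin : G.edgeSet.Finite) (hne : G.edgeSet.Nonempty)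
    (hG : Injective G.incidenceSet)
    (hinj : ∀ k (c : Sym2 V → Fin k), IsVDEC G k c → Set.InjOn c G.edgeSet) :
    vdecNum G = G.edgeSet.ncard := by
  obtain ⟨c, hc⟩ := exists_injOn_edgeSet hfin hne
  exact IsLeast.csInf_eq ⟨⟨c, isVDEC_of_injOn hc hG⟩,
    fun k ⟨c, hc⟩ => ncard_edgeSet_le_of_injOn (hinj k c hc)⟩

theorem evdecNum_eq_ncard_edgeSet (hfin : G.edgeSet.Finite) (hne : G.edgeSet.Nonempty)
    (hG : Injective G.incidenceSet)
    (hinj : ∀ k (c : Sym2 V → Fin k), IsVDEC G k c → Set.InjOn c G.edgeSet) :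
    evdecNum G = G.edgeSet.ncard := by
  obtain ⟨c, hc⟩ := exists_injOn_edgeSet hfin hne
  exact IsLeast.csInf_eq ⟨⟨c, isVDEC_of_injOn hc hG, isEquitable_of_injOn hc⟩,
    fun k ⟨c, hc, _⟩ => ncard_edgeSet_le_of_injOn (hinj k c hc)⟩

end EdgeColoring

namespace DSVert

variable {m n : ℕ}

abbrev s : DSVert m n := .inl (.inl ())
abbrev t : DSVert m n := .inr (.inl ())
abbrev sLeaf (i : Fin m) : DSVert m n := .inl (.inr i)
abbrev tLeaf (j : Fin n) : DSVert m n := .inr (.inr j)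

end DSVert

namespace doubleStar

open DSVert

variable {m n : ℕ}

theorem adj_s_sLeaf (i : Fin m) : (doubleStar m n).Adj s (sLeaf i) := by
  simp [doubleStar]

theorem adj_s_t : (doubleStar m n).Adj s t := by
  simp [doubleStar]

theorem adj_t_tLeaf (j : Fin n) : (doubleStar m n).Adj t (tLeaf j) := by
  simp [doubleStar]

theorem neighborSet_sLeaf (i : Fin m) : (doubleStar m n).neighborSet (sLeaf i) = {s} := by
  ext w
  rcases w with (_ | _) | (_ | _) <;> simp [doubleStar]

theorem neighborSet_tLeaf (j : Fin n) : (doubleStar m n).neighborSet (tLeaf j) = {t} := by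
  ext w
  rcases w with (_ | _) | (_ | _) <;> simp [doubleStar]

theorem incidenceSet_injective (hm : 1 ≤ m) : Injective (doubleStar m n).incidenceSet := by
  intro u v h
  by_contra huv
  have hu := neighborSet_subset_of_incidenceSet_eq huv h
  have hv := neighborSet_subset_of_incidenceSet_eq (Ne.symm huv) h.symm
  have hs (x : DSVert m n) : ¬(doubleStar m n).neighborSet s ⊆ {x} := fun hx => by
    have h₁ : t = x := hx adj_s_t
    have h₂ : sLeaf ⟨0, hm⟩ = x := hx (adj_s_sLeaf _)
    simp [← h₁] at h₂
  rcases u with (_ | i) | (_ | j)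
  · exact hs v hu
  · obtain rfl : s = v := hu (adj_s_sLeaf i).symm
    exact hs _ hv
  · obtain rfl : s = v := hu adj_s_t.symm
    exact hs _ hv
  · obtain rfl : t = v := hu (adj_t_tLeaf j).symm
    simpa using hv adj_s_t.symm

def edge : Fin m ⊕ Unit ⊕ Fin n → Sym2 (DSVert m n)
  | .inl i => s(s, sLeaf i)
  | .inr (.inl ()) => s(s, t)
  | .inr (.inr j) => s(t, tLeaf j)

theorem edge_injective : Injective (edge (m := m) (n := n)) := by
  rintro (i | _ | j) (i' | _ | j') h <;> simp_all [edge]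

theorem range_edge : Set.range edge = (doubleStar m n).edgeSet := by
  ext e
  induction e using Sym2.ind with
  | _ a b =>
    rcases a with (_ | i) | (_ | j) <;> rcases b with (_ | i') | (_ | j') <;>
      simp [edge, doubleStar, Sum.exists, Sym2.eq_swap, eq_comm]

theorem ncard_edgeSet : (doubleStar m n).edgeSet.ncard = m + n + 1 := by
  rw [← range_edge, Set.ncard_range_of_injective edge_injective]
  simp only [Nat.card_eq_fintype_card, Fintype.card_sum, Fintype.card_fin, Fintype.card_unit]
  omega

theorem _root_.IsVDEC.injOn_edgeSet_doubleStar {k : ℕ} {c : Sym2 (DSVert m n) → Fin k}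
    (hc : IsVDEC (doubleStar m n) k c) : Set.InjOn c (doubleStar m n).edgeSet := by
  have hst (i : Fin m) : c s(s, sLeaf i) ≠ c s(s, t) := hc.1 (adj_s_sLeaf i) adj_s_t (by simp)
  have hts (j : Fin n) : c s(s, t) ≠ c s(t, tLeaf j) := by
    rw [Sym2.eq_swap]
    exact hc.1 adj_s_t.symm (adj_t_tLeaf j) (by simp)
  have hleaves (i : Fin m) (j : Fin n) : c s(s, sLeaf i) ≠ c s(t, tLeaf j) :=
    hc.apply_ne_of_neighborSet_eq_singleton (by simp) (neighborSet_sLeaf i) (neighborSet_tLeaf j)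
  suffices Injective (c ∘ edge) by
    rw [← range_edge]
    rintro _ ⟨x, rfl⟩ _ ⟨y, rfl⟩ hxy
    exact congrArg edge (this hxy)
  rintro (i | _ | j) (i' | _ | j') hxy <;> simp only [comp_apply, edge] at hxy
  · by_contra hne
    exact hc.1 (adj_s_sLeaf i) (adj_s_sLeaf i') (by simpa using hne) hxy
  · exact absurd hxy (hst i)
  · exact absurd hxy (hleaves i j')
  · exact absurd hxy.symm (hst i')
  · rfl
  · exact absurd hxy (hts j')
  · exact absurd hxy.symm (hleaves i' j)
  · exact absurd hxy.symm (hts j)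
  · by_contra hne
    exact hc.1 (adj_t_tLeaf j) (adj_t_tLeaf j') (by simpa using hne) hxy

end doubleStar

theorem evdecNum_doubleStar_general (m n : ℕ) (hm : 1 ≤ m) :
    evdecNum (doubleStar m n) = vdecNum (doubleStar m n) ∧
    vdecNum (doubleStar m n) = m + n + 1 := by
  have hfin : (doubleStar m n).edgeSet.Finite := Set.toFinite _
  have hne : (doubleStar m n).edgeSet.Nonempty := ⟨s(DSVert.s, DSVert.t), doubleStar.adj_s_t⟩
  have hG := doubleStar.incidenceSet_injective (n := n) hm
  have hinj k (c : Sym2 (DSVert m n) → Fin k) (hc : IsVDEC (doubleStar m n) k c) :=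
    hc.injOn_edgeSet_doubleStar
  rw [evdecNum_eq_ncard_edgeSet hfin hne hG hinj, vdecNum_eq_ncard_edgeSet hfin hne hG hinj,
    doubleStar.ncard_edgeSet]
  exact ⟨rfl, rfl⟩

/-- For the double star `S_{m+1,n+1}` with `m, n ≥ 1`,
`χ'ₑₛ(S_{m+1,n+1}) = χ'ₛ(S_{m+1,n+1}) = m + n + 1`. -/
theorem evdecNum_doubleStar (m n : ℕ) (hm : 1 ≤ m) (hn : 1 ≤ n) :
    evdecNum (doubleStar m n) = vdecNum (doubleStar m n) ∧
    vdecNum (doubleStar m n) = m + n + 1 :=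
  evdecNum_doubleStar_general m n hm
end
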